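/- For all integers n ≥ 1 and k ≥ 1, the k-order harmonic numbers satisfy the recurrence H_n^{(k)} = H_{n−1}^{(k)} + Σ_{1 ≤ m ≤ i ≤ j ≤ n} C(n, j) · C(i, m) · (−1)^{j+m} · H_m^{(k)}, where the sum is over all triples of integers (m, i, j) with 1 ≤ m ≤ i ≤ j ≤ n. -/

import Mathlib

/-!
Write `T` for the alternating binomial transform `(T a) i = ∑ₘ (-1)ᵐ C(i, m) aₘ`, an involution.
With `b = T a`, the innermost sum is `(-1)ʲ C(n, j) bᵢ`. After swapping the sums over `j` and `i`,
the tail `∑_{j ≥ i} (-1)ʲ C(n, j)` equals `(-1)ⁱ C(n - 1, i - 1) = (-1)ⁱ (C(n, i) - C(n - 1, i))`,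
so the triple sum is `(T b) n - (T b) (n - 1) = aₙ - aₙ₋₁`.
-/

open Finset

/-- The `r`-order harmonic number `H r n = Σ_{m=1}^{n} 1/m^r`. -/
noncomputable def H (r n : ℕ) : ℝ :=
  ∑ m ∈ Finset.Icc 1 n, 1 / (m : ℝ) ^ r

theorem sum_Icc_one_eq_sum_range {M : Type*} [AddCommMonoid M] {f : ℕ → M} (hf : f 0 = 0)
    (n : ℕ) : ∑ i ∈ Icc 1 n, f i = ∑ i ∈ range (n + 1), f i := by
  rw [range_eq_Ico, sum_eq_sum_Ico_succ_bot (by omega : 0 < n + 1), hf, zero_add,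
    Ico_add_one_right_eq_Icc]

section BinomialTransform

variable {R : Type*} [CommRing R]

theorem sum_range_neg_one_pow_mul_choose (n : ℕ) :
    ∑ k ∈ range (n + 1), (-1 : R) ^ k * n.choose k = if n = 0 then 1 else 0 := by
  have := congrArg (Int.cast : ℤ → R) (Int.alternating_sum_range_choose (n := n))
  push_cast [apply_ite (Int.cast : ℤ → R)] at this
  simpa using this

theorem sum_range_neg_one_pow_mul_choose_succ (n m : ℕ) :
    ∑ k ∈ range (m + 1), (-1 : R) ^ k * (n + 1).choose k = (-1) ^ m * n.choose m := by
  exact_mod_cast congrArg (Int.cast : ℤ → R) (Int.alternating_sum_range_choose_eq_choose (n := n))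

theorem sum_Icc_neg_one_pow_mul_choose_succ {i : ℕ} (hi : 0 < i) (n : ℕ) :
    ∑ j ∈ Icc i (n + 1), (-1 : R) ^ j * (n + 1).choose j = (-1) ^ i * n.choose (i - 1) := by
  obtain ⟨i, rfl⟩ := Nat.exists_eq_add_one_of_ne_zero hi.ne'
  by_cases hin : i ≤ n + 1
  · rw [← Ico_add_one_right_eq_Icc, sum_Ico_eq_sub _ (by omega),
      sum_range_neg_one_pow_mul_choose_succ, sum_range_neg_one_pow_mul_choose_succ,
      Nat.choose_eq_zero_of_lt n.lt_succ_self]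
    simp [pow_succ]
  · rw [Icc_eq_empty (by omega), Nat.choose_eq_zero_of_lt (by omega)]
    simp

theorem sum_Icc_neg_one_pow_mul_choose_mul_choose {m N : ℕ} (h : m ≤ N) :
    ∑ i ∈ Icc m N, (-1 : R) ^ i * N.choose i * i.choose m = if N = m then (-1) ^ m else 0 := by
  have hchoose (k : ℕ) : (-1 : R) ^ (m + k) * N.choose (m + k) * (m + k).choose m
      = (-1) ^ m * N.choose m * ((-1) ^ k * (N - m).choose k) := by
    have := congrArg (Nat.cast : ℕ → R) (Nat.choose_mul (n := N) (Nat.le_add_right m k))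
    push_cast [Nat.add_sub_cancel_left] at this
    rw [pow_add, mul_assoc, this]
    ring
  rw [← Ico_add_one_right_eq_Icc, sum_Ico_eq_sum_range, sum_congr rfl fun k _ => hchoose k,
    ← mul_sum, show N + 1 - m = N - m + 1 by omega, sum_range_neg_one_pow_mul_choose]
  rcases h.eq_or_lt with rfl | hlt
  · simp
  · simp [hlt.ne', Nat.sub_ne_zero_of_lt hlt]

def binomialTransform (a : ℕ → R) (n : ℕ) : R :=
  ∑ m ∈ range (n + 1), (-1) ^ m * n.choose m * a m

theorem binomialTransform_zero (a : ℕ → R) : binomialTransform a 0 = a 0 := by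
  simp [binomialTransform]

theorem binomialTransform_binomialTransform (a : ℕ → R) :
    binomialTransform (binomialTransform a) = a := by
  funext N
  calc binomialTransform (binomialTransform a) N
      = ∑ m ∈ range (N + 1), (-1) ^ m * a m *
          ∑ i ∈ Icc m N, (-1 : R) ^ i * N.choose i * i.choose m := by
        simp only [binomialTransform, mul_sum]
        rw [sum_comm' (t' := range (N + 1)) (s' := fun m => Icc m N)
          (by intro i m; simp only [mem_range, mem_Icc]; omega)]
        refine sum_congr rfl fun m _ => sum_congr rfl fun i _ => ?_
        ring
    _ = ∑ m ∈ range (N + 1), if N = m then a N else 0 := by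
        refine sum_congr rfl fun m hm => ?_
        rw [sum_Icc_neg_one_pow_mul_choose_mul_choose (Nat.lt_succ_iff.mp (mem_range.mp hm))]
        split_ifs with h
        · rw [h, ← mul_rotate, ← pow_add, Even.neg_one_pow ⟨m, rfl⟩, one_mul]
        · rw [mul_zero]
    _ = a N := by simp

theorem sum_choose_mul_choose_mul_neg_one_pow_mul {a : ℕ → R} (ha : a 0 = 0) (n : ℕ) :
    ∑ j ∈ Icc 1 (n + 1), ∑ i ∈ Icc 1 j, ∑ m ∈ Icc 1 i,
      ((n + 1).choose j : R) * i.choose m * (-1) ^ (j + m) * a m = a (n + 1) - a n := by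
  set b := binomialTransform a with hb
  have hb0 : b 0 = 0 := (binomialTransform_zero a).trans ha
  calc _ = ∑ j ∈ Icc 1 (n + 1), ∑ i ∈ Icc 1 j, (-1) ^ j * ((n + 1).choose j : R) * b i := by
        refine sum_congr rfl fun j _ => sum_congr rfl fun i _ => ?_
        rw [sum_Icc_one_eq_sum_range (by simp [ha]), hb, binomialTransform, mul_sum]
        refine sum_congr rfl fun m _ => ?_
        ring
    _ = ∑ i ∈ Icc 1 (n + 1), b i * ∑ j ∈ Icc i (n + 1), (-1) ^ j * ((n + 1).choose j : R) := by
        simp only [mul_sum]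
        rw [sum_comm' (t' := Icc 1 (n + 1)) (s' := fun i => Icc i (n + 1))
          (by intro j i; simp only [mem_Icc]; omega)]
        refine sum_congr rfl fun i _ => sum_congr rfl fun j _ => ?_
        ring
    _ = ∑ i ∈ Icc 1 (n + 1), ((-1) ^ i * ((n + 1).choose i : R) * b i
          - (-1) ^ i * (n.choose i : R) * b i) := by
        refine sum_congr rfl fun i hi => ?_
        obtain ⟨i, rfl⟩ := Nat.exists_eq_add_one_of_ne_zero (by simp at hi; omega : i ≠ 0)
        rw [sum_Icc_neg_one_pow_mul_choose_succ (by omega : 0 < i + 1), Nat.add_sub_cancel,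
          Nat.choose_succ_succ']
        push_cast
        ring
    _ = binomialTransform b (n + 1) - binomialTransform b n := by
        rw [sum_sub_distrib, sum_Icc_one_eq_sum_range (by simp [hb0]),
          sum_Icc_one_eq_sum_range (by simp [hb0]),
          sum_range_succ (fun i => (-1 : R) ^ i * n.choose i * b i), Nat.choose_succ_self]
        simp [binomialTransform]
    _ = a (n + 1) - a n := by rw [binomialTransform_binomialTransform]

end BinomialTransform

theorem H_zero (r : ℕ) : H r 0 = 0 := by simp [H]

theorem stmt_14_general (n k : ℕ) :
    H k n = H k (n - 1) +
      ∑ j ∈ Finset.Icc 1 n, ∑ i ∈ Finset.Icc 1 j, ∑ m ∈ Finset.Icc 1 i,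
        (Nat.choose n j : ℝ) * (Nat.choose i m : ℝ) * (-1 : ℝ) ^ (j + m) * H k m := by
  cases n with
  | zero => simp
  | succ n =>
    rw [sum_choose_mul_choose_mul_neg_one_pow_mul (H_zero k), Nat.add_sub_cancel]
    ring

theorem stmt_14 (n k : ℕ) (hn : 1 ≤ n) (hk : 1 ≤ k) :
    H k n = H k (n - 1) +
      ∑ j ∈ Finset.Icc 1 n, ∑ i ∈ Finset.Icc 1 j, ∑ m ∈ Finset.Icc 1 i,
        (Nat.choose n j : ℝ) * (Nat.choose i m : ℝ) * (-1 : ℝ) ^ (j + m) * H k m :=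
  stmt_14_general n k
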